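/- arXiv:2303.16475 — 2 statements merged into one kernel-verified Lean document; each statement's English description precedes it below -/
import Mathlib

section
/- Let p ≡ 1 (mod 4) be prime, χ the Legendre symbol, k ≥ 1, and z ∈ F_p. Then the degree-1 necklace character sum satisfies Σ(\{z\},...,\{z\}) = (p-1)·Σ_{x₁⋯x_k = 1, x_i ∈ F_p} χ(1-x₁)⋯χ(1-x_k). -/
open Finset

/-- The necklace character sum `Σ(Z₁, ..., Z_k)` (the index `i + 1` is cyclic in `Fin k`). -/
noncomputable def necklaceSum (p : ℕ) [Fact p.Prime] (k : ℕ) [NeZero k]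
    (Z : Fin k → Finset (ZMod p)) : ℤ :=
  ∑ x : Fin k → ZMod p,
    (∏ i, quadraticChar (ZMod p) (x (i + 1) - x i)) *
      ∏ i, ∏ w ∈ Z i, quadraticChar (ZMod p) (x i - w)

section Aux

open Fin.NatCast

lemma aux_prod_shift {M : Type*} [CommMonoid M] {k : ℕ} [NeZero k] (x : Fin k → M) :
    ∏ i, x (i + 1) = ∏ i, x i :=
  Fintype.prod_equiv (Equiv.addRight 1) _ _ fun _ => rfl

variable {F : Type*} [Field F] {k : ℕ} [NeZero k]

/-- The forward map: from a scalar and a tuple of ratios, build the tuple. -/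
def nkFwd (c : F) (t : Fin k → F) : Fin k → F :=
  fun i => c * ∏ j ∈ Finset.range i.val, t (j : Fin k)

lemma nkFwd_zero (c : F) (t : Fin k → F) : nkFwd c t 0 = c := by
  simp [nkFwd]

lemma aux_prod_range_k (t : Fin k → F) :
    ∏ j ∈ Finset.range k, t (j : Fin k) = ∏ i, t i := by
  rw [← Fin.prod_univ_eq_prod_range]
  exact Fintype.prod_congr _ _ fun _ => by rw [Fin.cast_val_eq_self]

lemma nkFwd_ne_zero {c : F} (hc : c ≠ 0) {t : Fin k → F} (ht : ∀ j, t j ≠ 0) (i : Fin k) :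
    nkFwd c t i ≠ 0 :=
  mul_ne_zero hc (Finset.prod_ne_zero_iff.2 fun _ _ => ht _)

lemma nkFwd_rel {c : F} (hc : c ≠ 0) {t : Fin k → F} (ht : ∏ i, t i = 1) (i : Fin k) :
    nkFwd c t (i + 1) * (nkFwd c t i)⁻¹ = t i := by
  have ht0 : ∀ j, t j ≠ 0 := by
    intro j hj
    rw [Finset.prod_eq_zero (Finset.mem_univ j) hj] at ht
    exact zero_ne_one ht
  have hx : nkFwd c t i ≠ 0 := nkFwd_ne_zero hc ht0 i
  have hsucc : nkFwd c t i * t i = c * ∏ j ∈ Finset.range (i.val + 1), t (j : Fin k) := by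
    rw [Finset.prod_range_succ, ← mul_assoc]
    simp [nkFwd, Fin.cast_val_eq_self]
  rcases Nat.lt_or_ge (i.val + 1) k with h | h
  · have hk2 : 2 ≤ k := by omega
    have hv : ((i + 1 : Fin k)).val = i.val + 1 := by
      rw [Fin.val_add, Fin.val_one', Nat.mod_eq_of_lt (show 1 < k by omega),
        Nat.mod_eq_of_lt h]
    have hxs : nkFwd c t (i + 1) = nkFwd c t i * t i := by
      rw [hsucc]; simp only [nkFwd, hv]
    rw [hxs, mul_comm (nkFwd c t i) (t i), mul_assoc, mul_inv_cancel₀ hx, mul_one]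
  · have hik : i.val + 1 = k := by have := i.isLt; omega
    have h0 : i + 1 = (0 : Fin k) := by
      rcases eq_or_ne k 1 with hk | hk
      · subst hk; exact Subsingleton.elim _ _
      · ext
        rw [Fin.val_add, Fin.val_one', Nat.mod_eq_of_lt (show 1 < k by omega), hik,
          Nat.mod_self, Fin.val_zero]
    have hc' : nkFwd c t i * t i = c := by
      rw [hsucc, hik, aux_prod_range_k, ht, mul_one]
    rw [h0, nkFwd_zero]
    field_simp
    linear_combination hc'.symm

lemma nkBwd_aux {x : Fin k → F} (hx : ∀ i, x i ≠ 0) :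
    ∀ m : ℕ, m < k →
      x 0 * ∏ j ∈ Finset.range m, (x ((j : Fin k) + 1) * (x (j : Fin k))⁻¹) = x (m : Fin k) := by
  intro m
  induction m with
  | zero => intro _; simp
  | succ m ih =>
    intro hm
    rw [Finset.prod_range_succ, ← mul_assoc, ih (by omega),
      show ((m + 1 : ℕ) : Fin k) = (m : Fin k) + 1 by push_cast; ring,
      ← mul_assoc, mul_comm (x ((m : Fin k))) (x ((m : Fin k) + 1)), mul_assoc,
      mul_inv_cancel₀ (hx _), mul_one]

lemma nkFwd_bwd {x : Fin k → F} (hx : ∀ i, x i ≠ 0) :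
    nkFwd (x 0) (fun i => x (i + 1) * (x i)⁻¹) = x := by
  funext i
  have := nkBwd_aux hx i.val i.isLt
  rw [Fin.cast_val_eq_self] at this
  exact this

end Aux

/-- For `p ≡ 1 (mod 4)`, the degree-1 necklace character sum with all `Z_i = {z}`
equals `(p-1)` times a sum over tuples with product 1. -/
theorem necklaceSum_degree_one (p : ℕ) [Fact p.Prime] (hp : p % 4 = 1)
    (k : ℕ) [NeZero k] (z : ZMod p) :
    necklaceSum p k (fun _ => {z}) =
      (p - 1 : ℤ) *
        ∑ x ∈ Finset.univ.filter (fun x : Fin k → ZMod p => ∏ i, x i = 1),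
          ∏ i, quadraticChar (ZMod p) (1 - x i) := by
  classical
  have hp2 : 2 ≤ p := (Fact.out : p.Prime).two_le
  have hp5 : 5 ≤ p := by omega
  set χ := quadraticChar (ZMod p) with hχdef
  have hχ0 : χ 0 = 0 := quadraticChar_zero
  have hχneg : χ (-1) = 1 := by
    refine (quadraticChar_one_iff_isSquare (neg_ne_zero.mpr one_ne_zero)).2 ?_
    exact ZMod.exists_sq_eq_neg_one_iff.2 (by omega)
  -- Step 1: translate by z.
  have step1 : necklaceSum p k (fun _ => {z}) =
      ∑ x : Fin k → ZMod p, (∏ i, χ (x (i + 1) - x i)) * ∏ i, χ (x i) := by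
    rw [necklaceSum, ← Equiv.sum_comp (Equiv.addRight (fun _ => z : Fin k → ZMod p))]
    refine Finset.sum_congr rfl fun y _ => ?_
    simp only [Equiv.coe_addRight, Pi.add_apply, Finset.prod_singleton,
      add_sub_add_right_eq_sub, add_sub_cancel_right]
    rfl
  -- Step 2: restrict to tuples with nonzero entries.
  have step2 : ∑ x : Fin k → ZMod p, (∏ i, χ (x (i + 1) - x i)) * ∏ i, χ (x i) =
      ∑ x ∈ Finset.univ.filter (fun x : Fin k → ZMod p => ∀ i, x i ≠ 0),
        (∏ i, χ (x (i + 1) - x i)) * ∏ i, χ (x i) := by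
    refine (Finset.sum_filter_of_ne fun x _ hne i hi => ?_).symm
    exact absurd (mul_eq_zero_of_right _
      (Finset.prod_eq_zero (Finset.mem_univ i) (by rw [hi]; exact hχ0))) hne
  -- Step 3: rewrite the summand for nonzero tuples.
  have step3 : ∀ x : Fin k → ZMod p, (∀ i, x i ≠ 0) →
      (∏ i, χ (x (i + 1) - x i)) * ∏ i, χ (x i) =
        ∏ i, χ (x (i + 1) * (x i)⁻¹ - 1) := by
    intro x hx
    rw [← Finset.prod_mul_distrib]
    refine Finset.prod_congr rfl fun i _ => ?_
    rw [← map_mul, show (x (i + 1) - x i) * x i = (x (i + 1) * (x i)⁻¹ - 1) * (x i) ^ 2 by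
      linear_combination (-(x (i + 1) * x i)) * inv_mul_cancel₀ (hx i),
      map_mul, map_pow, quadraticChar_sq_one (hx i), mul_one]
  -- Step 4: the bijection.
  have step4 : ∑ q ∈ (Finset.univ.filter (fun c : ZMod p => c ≠ 0)) ×ˢ
        (Finset.univ.filter (fun t : Fin k → ZMod p => ∏ i, t i = 1)),
        (∏ i, χ (q.2 i - 1)) =
      ∑ x ∈ Finset.univ.filter (fun x : Fin k → ZMod p => ∀ i, x i ≠ 0),
        ∏ i, χ (x (i + 1) * (x i)⁻¹ - 1) := by
    refine Finset.sum_nbij' (fun q => nkFwd q.1 q.2)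
      (fun x => (x 0, fun i => x (i + 1) * (x i)⁻¹)) ?_ ?_ ?_ ?_ ?_
    · rintro ⟨c, t⟩ hq
      simp only [Finset.mem_product, Finset.mem_filter, Finset.mem_univ, true_and] at hq ⊢
      intro i
      have ht0 : ∀ j, t j ≠ 0 := by
        intro j hj
        rw [Finset.prod_eq_zero (Finset.mem_univ j) hj] at hq
        exact zero_ne_one hq.2
      exact nkFwd_ne_zero hq.1 ht0 i
    · intro x hx
      simp only [Finset.mem_product, Finset.mem_filter, Finset.mem_univ, true_and] at hx ⊢
      refine ⟨hx 0, ?_⟩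
      rw [Finset.prod_mul_distrib, Finset.prod_inv_distrib, aux_prod_shift,
        mul_inv_cancel₀ (Finset.prod_ne_zero_iff.2 fun i _ => hx i)]
    · rintro ⟨c, t⟩ hq
      simp only [Finset.mem_product, Finset.mem_filter, Finset.mem_univ, true_and] at hq
      have ht0 : ∀ j, t j ≠ 0 := by
        intro j hj
        rw [Finset.prod_eq_zero (Finset.mem_univ j) hj] at hq
        exact zero_ne_one hq.2
      refine Prod.ext (nkFwd_zero c t) (funext fun i => nkFwd_rel hq.1 hq.2 i)
    · intro x hx
      simp only [Finset.mem_filter, Finset.mem_univ, true_and] at hx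
      exact nkFwd_bwd hx
    · rintro ⟨c, t⟩ hq
      simp only [Finset.mem_product, Finset.mem_filter, Finset.mem_univ, true_and] at hq
      exact Finset.prod_congr rfl fun i _ => by rw [nkFwd_rel hq.1 hq.2]
  -- Step 5: counting.
  have hcard : ((Finset.univ.filter (fun c : ZMod p => c ≠ 0)).card : ℤ) = (p : ℤ) - 1 := by
    rw [Finset.filter_ne', Finset.card_erase_of_mem (Finset.mem_univ 0), Finset.card_univ,
      ZMod.card, Nat.cast_sub (one_le_two.trans hp2), Nat.cast_one]
  -- Step 6: χ(1 - t) = χ(t - 1).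
  have step6 : ∀ t : Fin k → ZMod p, (∏ i, χ (t i - 1)) = ∏ i, χ (1 - t i) := by
    intro t
    refine Finset.prod_congr rfl fun i _ => ?_
    rw [show (1 : ZMod p) - t i = (-1) * (t i - 1) by ring, map_mul, hχneg, one_mul]
  calc necklaceSum p k (fun _ => {z})
      = ∑ x ∈ Finset.univ.filter (fun x : Fin k → ZMod p => ∀ i, x i ≠ 0),
          (∏ i, χ (x (i + 1) - x i)) * ∏ i, χ (x i) := by rw [step1, step2]
    _ = ∑ x ∈ Finset.univ.filter (fun x : Fin k → ZMod p => ∀ i, x i ≠ 0),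
          ∏ i, χ (x (i + 1) * (x i)⁻¹ - 1) := by
        refine Finset.sum_congr rfl fun x hx => ?_
        simp only [Finset.mem_filter, Finset.mem_univ, true_and] at hx
        exact step3 x hx
    _ = ∑ q ∈ (Finset.univ.filter (fun c : ZMod p => c ≠ 0)) ×ˢ
          (Finset.univ.filter (fun t : Fin k → ZMod p => ∏ i, t i = 1)),
          (∏ i, χ (q.2 i - 1)) := step4.symm
    _ = ∑ c ∈ Finset.univ.filter (fun c : ZMod p => c ≠ 0),
          ∑ t ∈ Finset.univ.filter (fun t : Fin k → ZMod p => ∏ i, t i = 1),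
            ∏ i, χ (t i - 1) := by rw [Finset.sum_product]
    _ = ((Finset.univ.filter (fun c : ZMod p => c ≠ 0)).card : ℤ) *
          ∑ t ∈ Finset.univ.filter (fun t : Fin k → ZMod p => ∏ i, t i = 1),
            ∏ i, χ (t i - 1) := by
        rw [Finset.sum_const, nsmul_eq_mul]
    _ = (p - 1 : ℤ) * ∑ x ∈ Finset.univ.filter (fun x : Fin k → ZMod p => ∏ i, x i = 1),
          ∏ i, χ (1 - x i) := by
        rw [hcard]
        congr 1
        exact Finset.sum_congr rfl fun t _ => step6 t
end

section
/- For any finite simple graph G with at least one vertex, minimum degree δ > 0, maximum degree Δ, and adjacency matrix A with minimum eigenvalue λ_min < 0, the independence number satisfies α(G) ≤ |V(G)| · (δ²/(-λ_min·Δ) + 1)^{-1}. -/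
open Finset Matrix

section HaemersAux

variable {V : Type*} [Fintype V] [DecidableEq V] (G : SimpleGraph V) [DecidableRel G.Adj]

private lemma aux_herm : (G.adjMatrix ℝ).IsHermitian := by
  rw [Matrix.IsHermitian, Matrix.conjTranspose_eq_transpose_of_trivial]
  exact G.isSymm_adjMatrix

private lemma aux_symm_apply (i j : V) : G.adjMatrix ℝ i j = G.adjMatrix ℝ j i := by
  simp [SimpleGraph.adjMatrix_apply, G.adj_comm]

private lemma aux_row_sum (i : V) : ∑ j, G.adjMatrix ℝ i j = (G.degree i : ℝ) := by
  simp [SimpleGraph.adjMatrix_apply, SimpleGraph.degree, SimpleGraph.neighborFinset_eq_filter,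
    Finset.sum_boole]

private lemma aux_entry_nonneg (i j : V) : (0:ℝ) ≤ G.adjMatrix ℝ i j := by
  simp only [SimpleGraph.adjMatrix_apply]
  split <;> norm_num

private lemma aux_quad_lower (lam : ℝ)
    (hmin : ∀ (μ : ℝ) (v : V → ℝ), v ≠ 0 → (G.adjMatrix ℝ).mulVec v = μ • v → lam ≤ μ)
    (z : V → ℝ) : lam * (z ⬝ᵥ z) ≤ z ⬝ᵥ ((G.adjMatrix ℝ) *ᵥ z) := by
  set A := G.adjMatrix ℝ with hAdef
  have hA' : (A - lam • (1 : Matrix V V ℝ)).IsHermitian := by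
    rw [Matrix.IsHermitian, Matrix.conjTranspose_eq_transpose_of_trivial]
    rw [Matrix.transpose_sub, Matrix.transpose_smul, Matrix.transpose_one]
    rw [G.isSymm_adjMatrix]
  have heignn : ∀ i, 0 ≤ hA'.eigenvalues i := by
    intro i
    have hv := hA'.mulVec_eigenvectorBasis i
    have hvne : ⇑(hA'.eigenvectorBasis i) ≠ 0 := by
      have := hA'.eigenvectorBasis.orthonormal.ne_zero i
      intro h
      exact this (by ext x; exact congrFun h x)
    have hAv : A *ᵥ ⇑(hA'.eigenvectorBasis i)
        = (hA'.eigenvalues i + lam) • ⇑(hA'.eigenvectorBasis i) := by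
      have : A *ᵥ ⇑(hA'.eigenvectorBasis i)
          = (A - lam • 1) *ᵥ ⇑(hA'.eigenvectorBasis i) + lam • ⇑(hA'.eigenvectorBasis i) := by
        rw [Matrix.sub_mulVec, Matrix.smul_mulVec, Matrix.one_mulVec]
        ring_nf
      rw [this, hv, add_smul]
    have := hmin _ _ hvne hAv
    linarith
  have hpsd := hA'.posSemidef_iff_eigenvalues_nonneg.mpr heignn
  have h0 := hpsd.re_dotProduct_nonneg z
  simp only [RCLike.re_to_real, star_trivial] at h0
  have : z ⬝ᵥ ((A - lam • 1) *ᵥ z) = z ⬝ᵥ (A *ᵥ z) - lam * (z ⬝ᵥ z) := by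
    rw [Matrix.sub_mulVec, Matrix.smul_mulVec, Matrix.one_mulVec, dotProduct_sub,
      dotProduct_smul]
    simp [smul_eq_mul]
  linarith [h0.trans_eq this]

private lemma aux_quad_upper (z : V → ℝ) :
    z ⬝ᵥ ((G.adjMatrix ℝ) *ᵥ z) ≤ (G.maxDegree : ℝ) * (z ⬝ᵥ z) := by
  set A := G.adjMatrix ℝ with hAdef
  have step1 : z ⬝ᵥ (A *ᵥ z) = ∑ i, ∑ j, A i j * (z i * z j) := by
    simp only [dotProduct, Matrix.mulVec, dotProduct, Finset.mul_sum]
    exact Finset.sum_congr rfl fun i _ => Finset.sum_congr rfl fun j _ => by ring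
  have step2 : ∑ i, ∑ j, A i j * (z i * z j)
      ≤ ∑ i, ∑ j, A i j * ((z i ^ 2 + z j ^ 2) / 2) := by
    refine Finset.sum_le_sum fun i _ => Finset.sum_le_sum fun j _ => ?_
    refine mul_le_mul_of_nonneg_left ?_ (aux_entry_nonneg G i j)
    nlinarith [sq_nonneg (z i - z j)]
  have step3 : ∑ i, ∑ j, A i j * ((z i ^ 2 + z j ^ 2) / 2)
      = ∑ i, (G.degree i : ℝ) * z i ^ 2 := by
    have split : ∀ i j : V, A i j * ((z i ^ 2 + z j ^ 2) / 2)
        = A i j * z i ^ 2 / 2 + A i j * z j ^ 2 / 2 := fun i j => by ring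
    simp only [split, Finset.sum_add_distrib]
    have h1 : ∑ i, ∑ j, A i j * z i ^ 2 / 2 = ∑ i, (G.degree i : ℝ) * z i ^ 2 / 2 := by
      refine Finset.sum_congr rfl fun i _ => ?_
      rw [← Finset.sum_div, ← Finset.sum_mul, aux_row_sum]
    have h2 : ∑ i, ∑ j, A i j * z j ^ 2 / 2 = ∑ j, (G.degree j : ℝ) * z j ^ 2 / 2 := by
      rw [Finset.sum_comm]
      refine Finset.sum_congr rfl fun j _ => ?_
      rw [← Finset.sum_div, ← Finset.sum_mul]
      congr 2
      rw [← aux_row_sum G j]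
      exact Finset.sum_congr rfl fun i _ => aux_symm_apply G i j
    rw [h1, h2, ← Finset.sum_add_distrib]
    exact Finset.sum_congr rfl fun i _ => by ring
  have step4 : ∑ i, (G.degree i : ℝ) * z i ^ 2 ≤ ∑ i, (G.maxDegree : ℝ) * z i ^ 2 := by
    refine Finset.sum_le_sum fun i _ => mul_le_mul_of_nonneg_right ?_ (sq_nonneg _)
    exact_mod_cast G.degree_le_maxDegree i
  have step5 : ∑ i, (G.maxDegree : ℝ) * z i ^ 2 = (G.maxDegree : ℝ) * (z ⬝ᵥ z) := by
    rw [← Finset.mul_sum]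
    congr 1
    exact Finset.sum_congr rfl fun i _ => by rw [sq]
  calc z ⬝ᵥ (A *ᵥ z) = _ := step1
    _ ≤ _ := step2
    _ = _ := step3
    _ ≤ _ := step4
    _ = _ := step5

end HaemersAux

set_option maxHeartbeats 1600000 in
/-- Haemers' spectral bound on the independence number: for a finite graph `G` with
minimum degree `δ > 0`, maximum degree `Δ`, and minimum adjacency eigenvalue
`lam < 0`, every independent set `s` satisfies
`|s| ≤ |V| · (δ²/(-lam·Δ) + 1)⁻¹`. -/
theorem haemers_hoffman_bound {V : Type*} [Fintype V] [DecidableEq V] [Nonempty V]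
    (G : SimpleGraph V) [DecidableRel G.Adj]
    (hδ : 0 < G.minDegree)
    (lam : ℝ) (hneg : lam < 0)
    (heig : ∃ v : V → ℝ, v ≠ 0 ∧ (G.adjMatrix ℝ).mulVec v = lam • v)
    (hmin : ∀ (μ : ℝ) (v : V → ℝ), v ≠ 0 → (G.adjMatrix ℝ).mulVec v = μ • v → lam ≤ μ)
    (s : Finset V) (hs : ∀ x ∈ s, ∀ y ∈ s, ¬ G.Adj x y) :
    (s.card : ℝ) ≤
      (Fintype.card V : ℝ) *
        ((G.minDegree : ℝ) ^ 2 / (-lam * (G.maxDegree : ℝ)) + 1)⁻¹ := by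
  classical
  have hml : (0:ℝ) < -lam := neg_pos.2 hneg
  set δ : ℝ := (G.minDegree : ℝ) with hδdef
  set Δ : ℝ := (G.maxDegree : ℝ) with hΔdef
  set n : ℝ := (Fintype.card V : ℝ) with hndef
  rcases s.eq_empty_or_nonempty with rfl | hsne
  · have h0 : (0:ℝ) ≤ δ^2/(-lam*Δ) :=
      div_nonneg (sq_nonneg _) (mul_nonneg hml.le (Nat.cast_nonneg _))
    have h1 : (0:ℝ) < δ^2/(-lam*Δ)+1 := by linarith
    simp only [Finset.card_empty, Nat.cast_zero]
    exact mul_nonneg (Nat.cast_nonneg _) (inv_nonneg.2 h1.le)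
  · have hc : 0 < (s.card : ℝ) := by exact_mod_cast hsne.card_pos
    obtain ⟨v₀⟩ := (inferInstance : Nonempty V)
    have hΔδ : G.minDegree ≤ G.maxDegree :=
      (G.minDegree_le_degree v₀).trans (G.degree_le_maxDegree v₀)
    have hΔpos : (0:ℝ) < Δ := by
      rw [hΔdef]; exact_mod_cast lt_of_lt_of_le hδ hΔδ
    have hδpos : (0:ℝ) < δ := by rw [hδdef]; exact_mod_cast hδ
    set A := G.adjMatrix ℝ with hAdef
    set x : V → ℝ := fun v => if v ∈ s then 1 else 0 with hxdef
    set y : V → ℝ := A *ᵥ x with hydef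
    set X : ℝ := x ⬝ᵥ x with hXdef
    set Y : ℝ := y ⬝ᵥ y with hYdef
    set Q : ℝ := y ⬝ᵥ (A *ᵥ y) with hQdef
    have hAzero : ∀ u ∈ s, ∀ w ∈ s, A u w = 0 := fun u hu w hw => by
      simp [hAdef, SimpleGraph.adjMatrix_apply, hs u hu w hw]
    have hX : X = (s.card : ℝ) := by
      rw [hXdef]
      show ∑ v, x v * x v = _
      have : ∀ v, x v * x v = if v ∈ s then (1:ℝ) else 0 := by
        intro v; rw [hxdef]; dsimp only; split <;> ring
      simp only [this]
      simp [Finset.sum_ite_mem]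
    have hyapply : ∀ v, y v = ∑ u ∈ s, A v u := by
      intro v
      show (A *ᵥ x) v = _
      simp only [Matrix.mulVec, dotProduct, hxdef, mul_ite, mul_one, mul_zero]
      simp [Finset.sum_ite_mem]
    have hynn : ∀ v, 0 ≤ y v := fun v => by
      rw [hyapply]
      exact Finset.sum_nonneg fun u _ => aux_entry_nonneg G v u
    have hyzero : ∀ v ∈ s, y v = 0 := fun v hv => by
      rw [hyapply]
      exact Finset.sum_eq_zero fun u hu => hAzero v hv u hu
    have hxAx : x ⬝ᵥ (A *ᵥ x) = 0 := by
      show ∑ v, x v * y v = 0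
      refine Finset.sum_eq_zero fun v _ => ?_
      by_cases hv : v ∈ s
      · rw [hyzero v hv, mul_zero]
      · have : x v = 0 := by rw [hxdef]; simp [hv]
        rw [this, zero_mul]
    have hswap : ∀ a b : V → ℝ, a ⬝ᵥ (A *ᵥ b) = (A *ᵥ a) ⬝ᵥ b := by
      intro a b
      have hAT : Aᵀ = A := by rw [hAdef]; exact G.isSymm_adjMatrix
      rw [Matrix.dotProduct_mulVec, ← Matrix.mulVec_transpose, hAT]
    have hxAy : x ⬝ᵥ (A *ᵥ y) = Y := by rw [hswap, ← hydef, hYdef]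
    have hxy : x ⬝ᵥ y = 0 := by rw [hydef]; exact hxAx
    have hyx : y ⬝ᵥ x = 0 := by rw [dotProduct_comm]; exact hxy
    have hyAx : y ⬝ᵥ (A *ᵥ x) = Y := by rw [← hydef, hYdef]
    have hYnn : 0 ≤ Y := by
      rw [hYdef]; exact Finset.sum_nonneg fun u _ => mul_self_nonneg _
    have hd1 : Y^2 ≤ -(lam*X) * (Q - lam*Y) := by
      have hquad : ∀ t : ℝ, 0 ≤ (Q - lam*Y) * (t*t) + (2*Y)*t + (-(lam*X)) := by
        intro t
        have hl := aux_quad_lower G lam hmin (x + t • y)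
        rw [← hAdef] at hl
        have e1 : (x + t • y) ⬝ᵥ (x + t • y) = X + (t*t) * Y := by
          simp only [add_dotProduct, dotProduct_add, smul_dotProduct,
            dotProduct_smul, hxy, hyx, smul_eq_mul, ← hXdef, ← hYdef]
          ring
        have e2 : (x + t • y) ⬝ᵥ (A *ᵥ (x + t • y)) = 2*t*Y + (t*t)*Q := by
          rw [Matrix.mulVec_add, Matrix.mulVec_smul]
          simp only [add_dotProduct, dotProduct_add, smul_dotProduct,
            dotProduct_smul, hxAx, hxAy, hyAx, smul_eq_mul, ← hQdef]
          ring
        rw [e1, e2] at hl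
        nlinarith [hl]
      have hdisc := discrim_le_zero hquad
      rw [discrim] at hdisc
      nlinarith [hdisc]
    have hd2 : Y^2 ≤ (Δ*X) * (Δ*Y - Q) := by
      have hquad : ∀ t : ℝ, 0 ≤ (Δ*Y - Q) * (t*t) + (-(2*Y))*t + (Δ*X) := by
        intro t
        have hl := aux_quad_upper G (x + t • y)
        rw [← hAdef, ← hΔdef] at hl
        have e1 : (x + t • y) ⬝ᵥ (x + t • y) = X + (t*t) * Y := by
          simp only [add_dotProduct, dotProduct_add, smul_dotProduct,
            dotProduct_smul, hxy, hyx, smul_eq_mul, ← hXdef, ← hYdef]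
          ring
        have e2 : (x + t • y) ⬝ᵥ (A *ᵥ (x + t • y)) = 2*t*Y + (t*t)*Q := by
          rw [Matrix.mulVec_add, Matrix.mulVec_smul]
          simp only [add_dotProduct, dotProduct_add, smul_dotProduct,
            dotProduct_smul, hxAx, hxAy, hyAx, smul_eq_mul, ← hQdef]
          ring
        rw [e1, e2] at hl
        nlinarith [hl]
      have hdisc := discrim_le_zero hquad
      rw [discrim] at hdisc
      nlinarith [hdisc]
    have hcolsum : ∀ u, ∑ w, A w u = (G.degree u : ℝ) := fun u => by
      rw [← aux_row_sum G u]
      exact Finset.sum_congr rfl fun w _ => by rw [hAdef]; exact aux_symm_apply G w u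
    have hsumy : δ * (s.card : ℝ) ≤ ∑ v, y v := by
      have hrw : ∑ v, y v = ∑ u ∈ s, (G.degree u : ℝ) := by
        rw [Finset.sum_congr rfl (fun v _ => hyapply v), Finset.sum_comm (f := fun v u => A v u)]
        exact Finset.sum_congr rfl fun u _ => hcolsum u
      rw [hrw]
      calc δ * (s.card : ℝ) = ∑ _u ∈ s, δ := by
            rw [Finset.sum_const, nsmul_eq_mul]; ring
        _ ≤ _ := Finset.sum_le_sum fun u _ => by
            rw [hδdef]; exact_mod_cast G.minDegree_le_degree u
    have hsumypos : 0 < ∑ v, y v := lt_of_lt_of_le (mul_pos hδpos hc) hsumy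
    have hYpos : 0 < Y := by
      rcases hYnn.lt_or_eq with h | h
      · exact h
      · exfalso
        have hy0 : y = 0 := dotProduct_self_eq_zero.mp (by rw [← hYdef, ← h])
        rw [hy0] at hsumypos
        simp at hsumypos
    have hYle : Y ≤ (-lam*Δ) * X := by
      have h1' := mul_le_mul_of_nonneg_left hd1 hΔpos.le
      have h2' := mul_le_mul_of_nonneg_left hd2 hml.le
      have h3 : Y^2*(Δ - lam) ≤ ((-lam*Δ)*X)*((Δ-lam)*Y) := by nlinarith [h1', h2']
      have hdl : 0 < Δ - lam := by linarith
      have h4 : Y * ((Δ-lam)*Y) ≤ ((-lam*Δ)*X) * ((Δ-lam)*Y) := by nlinarith [h3]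
      exact le_of_mul_le_mul_right h4 (mul_pos hdl hYpos)
    have hCS : (∑ v, y v)^2 ≤ (n - (s.card:ℝ)) * Y := by
      have he : ∑ v ∈ sᶜ, y v = ∑ v, y v := by
        rw [← Finset.sum_compl_add_sum s y, Finset.sum_eq_zero hyzero, add_zero]
      have hcs := Finset.sum_mul_sq_le_sq_mul_sq sᶜ (fun _ => (1:ℝ)) y
      simp only [one_mul, one_pow] at hcs
      have hsub : ∑ v ∈ sᶜ, y v^2 ≤ Y := by
        rw [hYdef]
        calc ∑ v ∈ sᶜ, y v^2 ≤ ∑ v, y v^2 :=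
              Finset.sum_le_sum_of_subset_of_nonneg (Finset.subset_univ _)
                (fun v _ _ => sq_nonneg _)
          _ = y ⬝ᵥ y := Finset.sum_congr rfl fun v _ => by rw [sq]
      have hcard : ((sᶜ.card : ℕ) : ℝ) = n - (s.card:ℝ) := by
        rw [Finset.card_compl, Nat.cast_sub (s.card_le_univ), hndef]
      have hsc : ∑ v ∈ sᶜ, (1:ℝ) = ((sᶜ.card : ℕ) : ℝ) := by simp
      rw [hsc, hcard] at hcs
      have hnc : (0:ℝ) ≤ n - (s.card:ℝ) := by
        rw [hndef]
        have : (s.card:ℝ) ≤ (Fintype.card V : ℝ) := by exact_mod_cast s.card_le_univ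
        linarith
      calc (∑ v, y v)^2 = (∑ v ∈ sᶜ, y v)^2 := by rw [he]
        _ ≤ (n - (s.card:ℝ)) * ∑ v ∈ sᶜ, y v^2 := hcs
        _ ≤ (n - (s.card:ℝ)) * Y := mul_le_mul_of_nonneg_left hsub hnc
    have hkey : (s.card:ℝ) * (δ^2 + (-lam*Δ)) ≤ n * (-lam*Δ) := by
      have h5 : (δ * (s.card:ℝ))^2 ≤ (n - (s.card:ℝ))*Y :=
        le_trans (pow_le_pow_left₀ (mul_pos hδpos hc).le hsumy 2) hCS
      have hnc : (s.card:ℝ) ≤ n := by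
        rw [hndef]; exact_mod_cast s.card_le_univ
      have hYle' : Y ≤ (-lam*Δ)*(s.card:ℝ) := by rw [hX] at hYle; exact hYle
      have h6 : (δ*(s.card:ℝ))^2 ≤ (n-(s.card:ℝ))*((-lam*Δ)*(s.card:ℝ)) :=
        le_trans h5 (mul_le_mul_of_nonneg_left hYle' (by linarith))
      nlinarith [h6, hc, mul_pos hml hΔpos]
    have hm : (0:ℝ) < -lam*Δ := mul_pos hml hΔpos
    have hdpos : (0:ℝ) < δ^2 + (-lam*Δ) := by positivity
    have hrw : (δ^2 / (-lam*Δ) + 1)⁻¹ = (-lam*Δ) / (δ^2 + (-lam*Δ)) := by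
      rw [div_add_one hm.ne', inv_div]
    rw [hrw, ← mul_div_assoc, le_div_iff₀ hdpos]
    linarith [hkey]
end
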